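/- arXiv:2306.08104 — 2 statements merged into one kernel-verified Lean document; each statement's English description precedes it below -/
import Mathlib

section
/- Let r ≥ 1, d ≥ 1, n_1,…,n_d ≥ 1, X = ℙ^{n_1}×⋯×ℙ^{n_d} with Cox ring S and irrelevant ideal B(X) as in the context. Let ℰ ⊆ ℕ^d be a subset such that for every u ∈ ℕ^d with dim_ℂ S_u ≥ r there exist v ∈ ℰ with dim_ℂ S_v ≥ r, an integer k ≥ 0, and w, w' ∈ ℕ^d such that: (i) v + w ∈ ℰ and dim_ℂ S_{v+w} ≥ r; (ii) v + k·w = u + w'; and (iii) for every integer l ≥ 0 the multiplication map S_w ⊗ S_{v+lw} → S_{v+(l+1)w} is surjective. Then for every B(X)-saturated homogeneous ideal I ⊆ S with H_{S/I} = h_{r,X}, one has I = ((I_ℰ) : B(X)^∞), where (I_ℰ) denotes the ideal of S generated by ⋃_{u ∈ ℰ} I_u. -/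
open MvPolynomial

noncomputable section

/-- The saturation `(I : B^∞) = {f ∈ S : f·B^k ⊆ I for some k ≥ 0}`, as a set. -/
def satSet {R : Type*} [CommRing R] (I B : Ideal R) : Set R :=
  {x | ∃ k : ℕ, ∀ g ∈ B ^ k, x * g ∈ I}

/-- The variables of the Cox ring of `X = ℙ^{n_1}×⋯×ℙ^{n_d}`. -/
abbrev PPVars (d : ℕ) (n : Fin d → ℕ) : Type := Σ i : Fin d, Fin (n i + 1)

/-- The ℤ^d-grading: `deg α_{ij} = e_i`. -/
def wPP (d : ℕ) (n : Fin d → ℕ) : PPVars d n → (Fin d → ℕ) := fun p => Pi.single p.1 1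

/-- The degree-`u` component `S_u` of the Cox ring. -/
def coxPiece (d : ℕ) (n : Fin d → ℕ) (u : Fin d → ℕ) :
    Submodule ℂ (MvPolynomial (PPVars d n) ℂ) :=
  weightedHomogeneousSubmodule ℂ (wPP d n) u

/-- The degree-`u` graded piece `I_u = I ∩ S_u` of an ideal. -/
def idealPiece (d : ℕ) (n : Fin d → ℕ) (I : Ideal (MvPolynomial (PPVars d n) ℂ))
    (u : Fin d → ℕ) : Submodule ℂ (MvPolynomial (PPVars d n) ℂ) :=
  Submodule.restrictScalars ℂ I ⊓ coxPiece d n u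

/-- A homogeneous ideal: `I = ⊕_u I_u`. -/
def IsHomog (d : ℕ) (n : Fin d → ℕ) (I : Ideal (MvPolynomial (PPVars d n) ℂ)) : Prop :=
  Submodule.restrictScalars ℂ I = ⨆ u : Fin d → ℕ, idealPiece d n I u

/-- The Hilbert function of `S/I`: `H_{S/I}(u) = dim S_u − dim I_u`. -/
def HF (d : ℕ) (n : Fin d → ℕ) (I : Ideal (MvPolynomial (PPVars d n) ℂ)) (u : Fin d → ℕ) : ℕ :=
  Module.finrank ℂ ↥(coxPiece d n u) - Module.finrank ℂ ↥(idealPiece d n I u)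

/-- The irrelevant ideal `B(X) = ∏_{i=1}^d (α_{i0},…,α_{i n_i})`. -/
def irrel (d : ℕ) (n : Fin d → ℕ) : Ideal (MvPolynomial (PPVars d n) ℂ) :=
  ∏ i : Fin d, Ideal.span (Set.range fun j : Fin (n i + 1) =>
    (X ⟨i, j⟩ : MvPolynomial (PPVars d n) ℂ))

/-- The ideal generated by the graded pieces `I_u` for `u ∈ ℰ`. -/
def idealFromDegrees (d : ℕ) (n : Fin d → ℕ) (I : Ideal (MvPolynomial (PPVars d n) ℂ))
    (E : Set (Fin d → ℕ)) : Ideal (MvPolynomial (PPVars d n) ℂ) :=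
  Ideal.span {f | ∃ u ∈ E, f ∈ I ∧ f ∈ coxPiece d n u}

/-!
In degrees `u` with `dim S_u < r` the Hilbert function forces `I_u = 0`. Otherwise take
`v, k, w, w'` as in the hypothesis. As `I` is saturated, no associated prime of `S/I` contains
`S_w`, so over the infinite field `ℂ` some `θ ∈ S_w` is a nonzerodivisor modulo `I`. Along the
ray `v + m•w` the Hilbert function is constantly `r`; a dimension count then gives
`S_{a+w} = θ S_a + I_{a+w}`, hence `I_{a+2w} ⊆ (I_{a+w})`, and inductively every `I_{v+m•w}` lies
in the ideal generated by `I_v` and `I_{v+w}`. Finally `I_u · S_{w'} ⊆ I_{v+k•w}`, and a power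
of `B(X)` lies in the ideal generated by `S_{w'}`, so `I_u` lies in the saturation of `(I_ℰ)`.
-/

lemma Submodule.finrank_map_mulLeft {K A : Type*} [Field K] [Ring A] [NoZeroDivisors A]
    [Algebra K A] {θ : A} (hθ : θ ≠ 0) (M : Submodule K A) :
    Module.finrank K (M.map (LinearMap.mulLeft K θ)) = Module.finrank K M :=
  congrArg Cardinal.toNat (rank_map_eq (mul_right_injective₀ hθ) M)

/-- The zero divisors of `R ⧸ I` are the union of its finitely many associated primes, and a
vector space over an infinite field is not a finite union of proper subspaces, so `W` lies in a
single associated prime `Ann(g mod I)`. -/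
lemma Ideal.exists_notMem_forall_mul_mem_of_zeroDivisors {k R : Type*} [Field k] [Infinite k]
    [CommRing R] [IsNoetherianRing R] [Algebra k R] (I : Ideal R) (W : Submodule k R)
    (hW : ∀ θ ∈ W, ∃ g ∉ I, θ * g ∈ I) : ∃ g ∉ I, ∀ θ ∈ W, θ * g ∈ I := by
  have : Finite (associatedPrimes R (R ⧸ I)) := (associatedPrimes.finite R _).to_subtype
  let P : associatedPrimes R (R ⧸ I) → Subspace k W :=
    fun p => (p.1.restrictScalars k).comap W.subtype
  obtain ⟨p, hp⟩ := Subspace.exists_eq_top_of_iUnion_eq_univ (p := P) <|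
    Set.eq_univ_of_forall fun θ => by
      obtain ⟨g, hgI, hθg⟩ := hW θ θ.2
      have : (θ : R) ∈ ⋃ p ∈ associatedPrimes R (R ⧸ I), (p : Set R) := by
        rw [biUnion_associatedPrimes_eq_zero_divisors]
        exact ⟨Ideal.Quotient.mk I g, by simpa [Ideal.Quotient.eq_zero_iff_mem] using hgI,
          by simpa [Algebra.smul_def, ← map_mul, Ideal.Quotient.eq_zero_iff_mem] using hθg⟩
      obtain ⟨p, hp, hθp⟩ := Set.mem_iUnion₂.mp this
      exact Set.mem_iUnion.mpr ⟨⟨p, hp⟩, hθp⟩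
  obtain ⟨hprime, x, hx⟩ := isAssociatedPrime_iff.mp p.2
  obtain ⟨g, rfl⟩ := Ideal.Quotient.mk_surjective x
  refine ⟨g, fun hg => hprime.ne_top ?_, fun θ hθ => ?_⟩
  · rw [hx, eq_top_iff]
    intro r _
    simp [Submodule.mem_colon_singleton, Ideal.Quotient.eq_zero_iff_mem.mpr hg]
  · have : θ ∈ p.1 := Submodule.comap_subtype_eq_top.mp hp hθ
    rw [hx, Submodule.mem_colon_singleton, Submodule.mem_bot] at this
    simpa [Algebra.smul_def, ← map_mul, Ideal.Quotient.eq_zero_iff_mem] using this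

lemma satSet_mono {R : Type*} [CommRing R] {J I : Ideal R} (h : J ≤ I) (B : Ideal R) :
    satSet J B ⊆ satSet I B :=
  fun _ ⟨k, hk⟩ => ⟨k, fun g hg => h (hk g hg)⟩

def saturation {R : Type*} [CommRing R] (J B : Ideal R) : Ideal R where
  carrier := satSet J B
  add_mem' := by
    rintro x y ⟨k, hk⟩ ⟨l, hl⟩
    refine ⟨max k l, fun g hg => ?_⟩
    rw [add_mul]
    exact J.add_mem (hk g (Ideal.pow_le_pow_right (le_max_left k l) hg))
      (hl g (Ideal.pow_le_pow_right (le_max_right k l) hg))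
  zero_mem' := ⟨0, fun g _ => by simp⟩
  smul_mem' c x := fun ⟨k, hk⟩ => ⟨k, fun g hg => by
    rw [smul_eq_mul, mul_assoc]
    exact J.mul_mem_left c (hk g hg)⟩

namespace CoxRing

variable {d : ℕ} {n : Fin d → ℕ}

local notation "S" => MvPolynomial (PPVars d n) ℂ

lemma mem_idealPiece {I : Ideal S} {u : Fin d → ℕ} {f : S} :
    f ∈ idealPiece d n I u ↔ f ∈ I ∧ f ∈ coxPiece d n u := Iff.rfl

lemma weight_wPP_apply (σ : PPVars d n →₀ ℕ) (i : Fin d) :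
    Finsupp.weight (wPP d n) σ i = ∑ j, σ ⟨i, j⟩ := by
  rw [Finsupp.weight_apply, Finsupp.sum_fintype _ _ (by simp), Finset.sum_apply,
    Fintype.sum_sigma, Finset.sum_eq_single i (by simp +contextual [wPP]) (by simp)]
  simp [wPP]

lemma degree_eq_sum_weight_wPP (σ : PPVars d n →₀ ℕ) :
    σ.degree = ∑ i, Finsupp.weight (wPP d n) σ i := by
  simp [Finsupp.degree_eq_sum, weight_wPP_apply, Fintype.sum_sigma]

lemma exists_le_weight_wPP_eq (σ : PPVars d n →₀ ℕ) {a : Fin d → ℕ}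
    (ha : a ≤ Finsupp.weight (wPP d n) σ) :
    ∃ τ ≤ σ, Finsupp.weight (wPP d n) τ = a := by
  have hblock (i : Fin d) :
      a i ≤ (Finsupp.equivFunOnFinite.symm fun j => σ ⟨i, j⟩).degree := by
    simpa [Finsupp.degree_eq_sum, weight_wPP_apply] using ha i
  choose g hgσ hga using fun i => Finsupp.exists_le_degree_eq _ _ (hblock i)
  refine ⟨Finsupp.equivFunOnFinite.symm fun p => g p.1 p.2,
    fun p => by simpa using hgσ p.1 p.2, ?_⟩
  funext i
  simp [weight_wPP_apply, ← hga i, Finsupp.degree_eq_sum]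

lemma coxPiece_mul (a b : Fin d → ℕ) :
    coxPiece d n a * coxPiece d n b = coxPiece d n (a + b) := by
  refine le_antisymm (weightedHomogeneousSubmodule_mul _ _ _) fun f hf => ?_
  induction hf using IsWeightedHomogeneous.induction_on with
  | zero => exact zero_mem _
  | add p q _ _ hp hq => exact add_mem hp hq
  | monomial σ c hσ =>
    obtain ⟨τ, hτσ, hτ⟩ := exists_le_weight_wPP_eq σ (hσ ▸ le_self_add)
    have hrest : Finsupp.weight (wPP d n) (σ - τ) = b := by
      have := congrArg (Finsupp.weight (wPP d n)) (add_tsub_cancel_of_le hτσ)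
      rw [map_add, hτ, hσ] at this
      exact add_left_cancel this
    rw [← add_tsub_cancel_of_le hτσ, ← mul_one c, ← monomial_mul]
    exact Submodule.mul_mem_mul (isWeightedHomogeneous_monomial _ _ _ hτ)
      (isWeightedHomogeneous_monomial _ _ _ hrest)

instance (u : Fin d → ℕ) : FiniteDimensional ℂ (coxPiece d n u) := by
  have hfin : {σ : PPVars d n →₀ ℕ | Finsupp.weight (wPP d n) σ = u}.Finite :=
    (Finsupp.finite_of_degree_le (∑ i, u i)).subset fun σ (hσ : _ = u) => by
      simp [degree_eq_sum_weight_wPP, hσ]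
  have := hfin.to_subtype
  rw [coxPiece, weightedHomogeneousSubmodule_eq_finsupp_supported]
  exact Module.Finite.of_basis (basisRestrictSupport ℂ _)

instance (I : Ideal S) (u : Fin d → ℕ) : FiniteDimensional ℂ (idealPiece d n I u) :=
  Submodule.finiteDimensional_of_le inf_le_right

lemma exists_ne_zero_mem_coxPiece (u : Fin d → ℕ) : ∃ f ∈ coxPiece d n u, f ≠ 0 := by
  let τ : PPVars d n →₀ ℕ := ∑ i, Finsupp.single ⟨i, 0⟩ (u i)
  have hτ : Finsupp.weight (wPP d n) τ = u := by
    funext i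
    simp [τ, Finsupp.weight_single, wPP, Pi.single_apply]
  exact ⟨monomial τ 1, isWeightedHomogeneous_monomial _ _ _ hτ, by simp⟩

lemma finrank_coxPiece_le_add (u v : Fin d → ℕ) :
    Module.finrank ℂ (coxPiece d n u) ≤ Module.finrank ℂ (coxPiece d n (u + v)) := by
  obtain ⟨μ, hμ, hμ0⟩ := exists_ne_zero_mem_coxPiece (n := n) v
  rw [← Submodule.finrank_map_mulLeft hμ0]
  refine Submodule.finrank_mono ?_
  rintro _ ⟨f, hf, rfl⟩
  rw [add_comm]
  exact hμ.mul hf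

lemma HF_add_finrank_idealPiece (I : Ideal S) (u : Fin d → ℕ) :
    HF d n I u + Module.finrank ℂ (idealPiece d n I u) = Module.finrank ℂ (coxPiece d n u) :=
  Nat.sub_add_cancel (Submodule.finrank_mono inf_le_right)

lemma idealPiece_eq_bot_of_HF_eq {I : Ideal S} {u : Fin d → ℕ}
    (h : HF d n I u = Module.finrank ℂ (coxPiece d n u)) : idealPiece d n I u = ⊥ := by
  have := HF_add_finrank_idealPiece I u
  exact Submodule.finrank_eq_zero.mp (by omega)

lemma span_coxPiece_mul_le (a b : Fin d → ℕ) :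
    Ideal.span (coxPiece d n a : Set S) * Ideal.span (coxPiece d n b : Set S) ≤
      Ideal.span (coxPiece d n (a + b) : Set S) := by
  rw [Ideal.span_mul_span', Ideal.span_le]
  rintro _ ⟨f, hf, g, hg, rfl⟩
  exact Ideal.subset_span (IsWeightedHomogeneous.mul hf hg)

lemma span_coxPiece_add_le (a b : Fin d → ℕ) :
    Ideal.span (coxPiece d n (a + b) : Set S) ≤ Ideal.span (coxPiece d n a : Set S) := by
  have : coxPiece d n a * coxPiece d n b ≤
      (Ideal.span (coxPiece d n a : Set S)).restrictScalars ℂ :=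
    Submodule.mul_le.mpr fun f hf g _ => Ideal.mul_mem_right g _ (Ideal.subset_span hf)
  rw [Ideal.span_le, ← coxPiece_mul]
  exact this

lemma irrel_le_span_coxPiece_one : irrel d n ≤ Ideal.span (coxPiece d n 1 : Set S) := by
  rw [irrel, Ideal.prod_span, Ideal.span_le]
  intro f hf
  obtain ⟨g, hg, rfl⟩ := (Set.mem_fintype_prod _ _).mp hf
  have hone : (1 : Fin d → ℕ) = ∑ i, Pi.single i 1 := (Finset.univ_sum_single _).symm
  rw [hone]
  refine Ideal.subset_span (IsWeightedHomogeneous.prod _ g (fun i => Pi.single i 1) fun i _ => ?_)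
  obtain ⟨j, hj⟩ := hg i
  rw [← hj]
  exact isWeightedHomogeneous_X ℂ (wPP d n) ⟨i, j⟩

lemma irrel_pow_le_span_coxPiece (m : ℕ) :
    irrel d n ^ m ≤ Ideal.span (coxPiece d n (m • 1) : Set S) := by
  induction m with
  | zero =>
    rw [pow_zero, zero_smul, Ideal.one_eq_top, top_le_iff, Ideal.eq_top_iff_one]
    exact Ideal.subset_span (isWeightedHomogeneous_one ℂ _)
  | succ m ih =>
    rw [pow_succ, succ_nsmul]
    exact (Ideal.mul_mono ih irrel_le_span_coxPiece_one).trans (span_coxPiece_mul_le _ _)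

lemma mem_satSet_of_forall_mul_mem {J : Ideal S} {f : S} {w : Fin d → ℕ}
    (h : ∀ s ∈ coxPiece d n w, f * s ∈ J) : f ∈ satSet J (irrel d n) := by
  let m := ∑ i, w i
  have hw : m • 1 = w + (m • 1 - w) := (add_tsub_cancel_of_le fun i => by
    simpa using Finset.single_le_sum (fun j _ => Nat.zero_le (w j)) (Finset.mem_univ i)).symm
  have hspan : Ideal.span (coxPiece d n w : Set S) ≤ J.colon (Ideal.span {f}) :=
    Ideal.span_le.mpr fun s hs =>
      Submodule.mem_colon_span_singleton.mpr (by simpa [mul_comm] using h s hs)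
  refine ⟨m, fun g hg => ?_⟩
  have := hspan (span_coxPiece_add_le _ _ (hw ▸ irrel_pow_le_span_coxPiece m hg))
  rw [Submodule.mem_colon_span_singleton, smul_eq_mul, mul_comm] at this
  exact this

lemma exists_regular_mem_coxPiece {I : Ideal S} (hsat : satSet I (irrel d n) = I)
    (w : Fin d → ℕ) : ∃ θ ∈ coxPiece d n w, θ ≠ 0 ∧ ∀ g, θ * g ∈ I → g ∈ I := by
  by_cases hI : I = ⊤
  · obtain ⟨θ, hθ, hθ0⟩ := exists_ne_zero_mem_coxPiece (n := n) w
    exact ⟨θ, hθ, hθ0, fun g _ => hI ▸ Submodule.mem_top⟩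
  by_contra! h
  obtain ⟨g, hgI, hg⟩ := I.exists_notMem_forall_mul_mem_of_zeroDivisors (coxPiece d n w)
    fun θ hθ => by
      by_cases hθ0 : θ = 0
      · exact ⟨1, (I.ne_top_iff_one).mp hI, by simp [hθ0]⟩
      · obtain ⟨g, hθg, hgI⟩ := h θ hθ hθ0
        exact ⟨g, hgI, hθg⟩
  have hgsat : g ∈ satSet I (irrel d n) :=
    mem_satSet_of_forall_mul_mem fun s hs => mul_comm g s ▸ hg s hs
  rw [hsat] at hgsat
  exact hgI hgsat

section Regular

variable {I : Ideal (MvPolynomial (PPVars d n) ℂ)} {θ : MvPolynomial (PPVars d n) ℂ}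
  {a w : Fin d → ℕ}

/-- Regularity of `θ` gives `θ S_a ∩ I_{a+w} = θ I_a`, so the right-hand side has dimension
`dim S_a + dim I_{a+w} - dim I_a`, which equals `dim S_{a+w}` when the Hilbert function agrees in
degrees `a` and `a + w`. -/
lemma coxPiece_add_eq_map_mulLeft_sup (hθ : θ ∈ coxPiece d n w) (hθ0 : θ ≠ 0)
    (hreg : ∀ g, θ * g ∈ I → g ∈ I) (hHF : HF d n I a = HF d n I (a + w)) :
    coxPiece d n (a + w) =
      (coxPiece d n a).map (LinearMap.mulLeft ℂ θ) ⊔ idealPiece d n I (a + w) := by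
  set A := (coxPiece d n a).map (LinearMap.mulLeft ℂ θ)
  have hA : A ≤ coxPiece d n (a + w) := by
    rintro _ ⟨f, hf, rfl⟩
    exact add_comm w a ▸ IsWeightedHomogeneous.mul hθ hf
  have hAI : A ⊓ idealPiece d n I (a + w) =
      (idealPiece d n I a).map (LinearMap.mulLeft ℂ θ) := by
    apply le_antisymm
    · rintro _ ⟨⟨f, hf, rfl⟩, hθf, -⟩
      exact ⟨f, ⟨hreg f hθf, hf⟩, rfl⟩
    · rintro _ ⟨f, ⟨hfI, hf⟩, rfl⟩
      exact ⟨⟨f, hf, rfl⟩, I.mul_mem_left θ hfI, hA ⟨f, hf, rfl⟩⟩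
  have hdim := Submodule.finrank_sup_add_finrank_inf_eq A (idealPiece d n I (a + w))
  rw [hAI, Submodule.finrank_map_mulLeft hθ0, Submodule.finrank_map_mulLeft hθ0] at hdim
  have ha := HF_add_finrank_idealPiece I a
  have haw := HF_add_finrank_idealPiece I (a + w)
  have hle : A ⊔ idealPiece d n I (a + w) ≤ coxPiece d n (a + w) := sup_le hA inf_le_right
  exact (Submodule.eq_of_le_of_finrank_le hle (by omega)).symm

lemma idealPiece_add_add_le (hθ : θ ∈ coxPiece d n w) (hθ0 : θ ≠ 0)
    (hreg : ∀ g, θ * g ∈ I → g ∈ I) (hHF : HF d n I a = HF d n I (a + w)) {J : Ideal S}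
    (hJ : idealPiece d n I (a + w) ≤ J.restrictScalars ℂ) :
    idealPiece d n I (a + w + w) ≤ J.restrictScalars ℂ := by
  intro x hx
  obtain ⟨hxI, hx⟩ := mem_idealPiece.mp hx
  have hθS : coxPiece d n w * (coxPiece d n a).map (LinearMap.mulLeft ℂ θ) ≤
      (coxPiece d n (a + w)).map (LinearMap.mulLeft ℂ θ) := by
    refine Submodule.mul_le.mpr fun s hs _ ⟨f, hf, hθf⟩ => ⟨s * f, ?_, ?_⟩
    · exact add_comm w a ▸ IsWeightedHomogeneous.mul hs hf
    · rw [← hθf, LinearMap.mulLeft_apply, LinearMap.mulLeft_apply, mul_left_comm]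
  have hIJ : coxPiece d n w * idealPiece d n I (a + w) ≤ (I ⊓ J).restrictScalars ℂ :=
    Submodule.mul_le.mpr fun s _ f hf => ⟨I.mul_mem_left s hf.1, J.mul_mem_left s (hJ hf)⟩
  have hx' : x ∈ coxPiece d n w * coxPiece d n (a + w) := by
    rwa [coxPiece_mul, add_comm]
  rw [coxPiece_add_eq_map_mulLeft_sup hθ hθ0 hreg hHF, Submodule.mul_sup] at hx'
  obtain ⟨_, hy, z, hz, rfl⟩ := Submodule.mem_sup.mp hx'
  obtain ⟨g, hg, rfl⟩ := hθS hy
  obtain ⟨hzI, hzJ⟩ := hIJ hz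
  have hgI : g ∈ I := hreg g (by simpa using I.sub_mem hxI hzI)
  exact J.add_mem (J.mul_mem_left θ (hJ ⟨hgI, hg⟩)) hzJ

lemma idealPiece_add_nsmul_le (hθ : θ ∈ coxPiece d n w) (hθ0 : θ ≠ 0)
    (hreg : ∀ g, θ * g ∈ I → g ∈ I) {v : Fin d → ℕ}
    (hHF : ∀ m : ℕ, HF d n I (v + m • w) = HF d n I v) {J : Ideal S}
    (h0 : idealPiece d n I v ≤ J.restrictScalars ℂ)
    (h1 : idealPiece d n I (v + w) ≤ J.restrictScalars ℂ) (m : ℕ) :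
    idealPiece d n I (v + m • w) ≤ J.restrictScalars ℂ := by
  induction m using Nat.twoStepInduction with
  | zero => simpa using h0
  | one => simpa using h1
  | more m _ ih =>
    have hstep : v + m • w + w = v + (m + 1) • w := by rw [add_assoc, ← succ_nsmul]
    have hm : HF d n I (v + m • w) = HF d n I (v + m • w + w) := by rw [hstep, hHF, hHF]
    rw [show v + (m + 2) • w = v + m • w + w + w by rw [hstep, add_assoc, ← succ_nsmul]]
    exact idealPiece_add_add_le hθ hθ0 hreg hm (hstep ▸ ih)

end Regular

lemma idealPiece_le_saturation {I J : Ideal S} (hsat : satSet I (irrel d n) = I)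
    {u v w w' : Fin d → ℕ} {k : ℕ} (hHF : ∀ m : ℕ, HF d n I (v + m • w) = HF d n I v)
    (hvk : v + k • w = u + w') (h0 : idealPiece d n I v ≤ J.restrictScalars ℂ)
    (h1 : idealPiece d n I (v + w) ≤ J.restrictScalars ℂ) :
    idealPiece d n I u ≤ (saturation J (irrel d n)).restrictScalars ℂ := by
  obtain ⟨θ, hθ, hθ0, hreg⟩ := exists_regular_mem_coxPiece hsat w
  have hJ := idealPiece_add_nsmul_le hθ hθ0 hreg hHF h0 h1 k
  intro f hf
  obtain ⟨hfI, hf⟩ := mem_idealPiece.mp hf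
  refine mem_satSet_of_forall_mul_mem (w := w') fun s hs => hJ ⟨I.mul_mem_right s hfI, ?_⟩
  rw [hvk]
  exact IsWeightedHomogeneous.mul hf hs

end CoxRing

open CoxRing in
theorem sufficient_subset_criterion_general (r d : ℕ)
    (n : Fin d → ℕ)
    (E : Set (Fin d → ℕ))
    (hE : ∀ u : Fin d → ℕ, r ≤ Module.finrank ℂ ↥(coxPiece d n u) →
      ∃ v ∈ E, r ≤ Module.finrank ℂ ↥(coxPiece d n v) ∧
        ∃ (k : ℕ) (w w' : Fin d → ℕ),
          (v + w ∈ E ∧ r ≤ Module.finrank ℂ ↥(coxPiece d n (v + w))) ∧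
          v + k • w = u + w' ∧
          ∀ l : ℕ, coxPiece d n w * coxPiece d n (v + l • w) = coxPiece d n (v + (l + 1) • w))
    (I : Ideal (MvPolynomial (PPVars d n) ℂ))
    (hIhom : IsHomog d n I)
    (hIsat : satSet I (irrel d n) = (I : Set (MvPolynomial (PPVars d n) ℂ)))
    (hIHF : ∀ u : Fin d → ℕ, HF d n I u = min (Module.finrank ℂ ↥(coxPiece d n u)) r) :
    satSet (idealFromDegrees d n I E) (irrel d n) =
      (I : Set (MvPolynomial (PPVars d n) ℂ)) := by
  set J := idealFromDegrees d n I E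
  have hJI : J ≤ I := Ideal.span_le.mpr fun f ⟨_, _, hf, _⟩ => hf
  have hJ {u} (hu : u ∈ E) : idealPiece d n I u ≤ J.restrictScalars ℂ :=
    fun f hf => Ideal.subset_span ⟨u, hu, hf⟩
  have hpieces (u : Fin d → ℕ) :
      idealPiece d n I u ≤ (saturation J (irrel d n)).restrictScalars ℂ := by
    by_cases hru : r ≤ Module.finrank ℂ (coxPiece d n u)
    · obtain ⟨v, hvE, hrv, k, w, w', ⟨hvwE, -⟩, hvk, -⟩ := hE u hru
      have hHF (m : ℕ) : HF d n I (v + m • w) = HF d n I v := by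
        rw [hIHF, hIHF, min_eq_right hrv, min_eq_right (hrv.trans (finrank_coxPiece_le_add v _))]
      exact idealPiece_le_saturation hIsat hHF hvk (hJ hvE) (hJ hvwE)
    · rw [idealPiece_eq_bot_of_HF_eq (by rw [hIHF]; omega)]
      exact bot_le
  refine Set.Subset.antisymm (hIsat ▸ satSet_mono hJI _) fun x hx => ?_
  have hx' : x ∈ ⨆ u, idealPiece d n I u := hIhom ▸ hx
  exact iSup_le hpieces hx'

/-- Lemma 5.3: the criterion for a subset `ℰ ⊆ Eff(X) = ℕ^d` to be `(r,X)`-sufficient for a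
product of projective spaces: every `B(X)`-saturated homogeneous ideal with Hilbert function
`h_{r,X}` is recovered from its graded pieces in degrees belonging to `ℰ` by saturating. -/
theorem sufficient_subset_criterion (r d : ℕ) (hr : 1 ≤ r) (hd : 1 ≤ d)
    (n : Fin d → ℕ) (hn : ∀ i, 1 ≤ n i)
    (E : Set (Fin d → ℕ))
    (hE : ∀ u : Fin d → ℕ, r ≤ Module.finrank ℂ ↥(coxPiece d n u) →
      ∃ v ∈ E, r ≤ Module.finrank ℂ ↥(coxPiece d n v) ∧
        ∃ (k : ℕ) (w w' : Fin d → ℕ),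
          (v + w ∈ E ∧ r ≤ Module.finrank ℂ ↥(coxPiece d n (v + w))) ∧
          v + k • w = u + w' ∧
          ∀ l : ℕ, coxPiece d n w * coxPiece d n (v + l • w) = coxPiece d n (v + (l + 1) • w))
    (I : Ideal (MvPolynomial (PPVars d n) ℂ))
    (hIhom : IsHomog d n I)
    (hIsat : satSet I (irrel d n) = (I : Set (MvPolynomial (PPVars d n) ℂ)))
    (hIHF : ∀ u : Fin d → ℕ, HF d n I u = min (Module.finrank ℂ ↥(coxPiece d n u)) r) :
    satSet (idealFromDegrees d n I E) (irrel d n) =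
      (I : Set (MvPolynomial (PPVars d n) ℂ)) :=
  sufficient_subset_criterion_general r d n E hE I hIhom hIsat hIHF
end
end

section
/- Let r ≥ 1, d ≥ 1, n_1,…,n_d ≥ 1, X = ℙ^{n_1}×⋯×ℙ^{n_d} with Cox ring S and irrelevant ideal B(X) as in the context. Let 𝒜 ⊆ ℬ ⊆ ℕ^d be subsets such that u ∈ ℬ and v ∈ ℕ^d imply u+v ∈ ℬ, and u ∈ 𝒜 and v ∈ ℕ^d imply u+v ∈ 𝒜. Then: (a) for every homogeneous ideal I ⊆ S, the graded subspace J ⊆ S with J_u = S_u for u ∈ 𝒜, J_u = I_u for u ∈ ℬ∖𝒜, and J_u = 0 for u ∉ ℬ, is a homogeneous ideal of S; (b) if moreover the set ℬ∖𝒜 is (r,X)-sufficient (i.e. every B(X)-saturated homogeneous ideal I' with H_{S/I'} = h_{r,X} satisfies I' = ((I'_{ℬ∖𝒜}) : B(X)^∞), where (I'_{ℬ∖𝒜}) is the ideal generated by ⋃_{u∈ℬ∖𝒜} I'_u), then any two B(X)-saturated homogeneous ideals I, I' with H_{S/I} = H_{S/I'} = h_{r,X} that have the same associated ideal J must be equal.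 -/
open MvPolynomial

noncomputable section

/-- The graded subspace `J` with `J_u = S_u` for `u ∈ 𝒜`, `J_u = I_u` for `u ∈ ℬ∖𝒜`, and
`J_u = 0` for `u ∉ ℬ`. -/
def truncGraded (d : ℕ) (n : Fin d → ℕ) (A B : Set (Fin d → ℕ))
    (I : Ideal (MvPolynomial (PPVars d n) ℂ)) : Submodule ℂ (MvPolynomial (PPVars d n) ℂ) :=
  ⨆ u : Fin d → ℕ,
    ((⨆ _ : u ∈ A, coxPiece d n u) ⊔ (⨆ _ : u ∈ B \ A, idealPiece d n I u))

/-!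
In the graded ring `S`, a sum of subspaces `J_u ⊆ S_u` has degree-`u` piece exactly `J_u`, and it
is an ideal as soon as `S_v · J_u ⊆ J_{u+v}`; for the truncation this is where the closedness of
`𝒜` and `ℬ` under translation enters. So `J` determines the pieces `I_u` for `u ∈ ℬ ∖ 𝒜`, hence the
ideal `(I_{ℬ∖𝒜})`, and by sufficiency its saturation, which is `I`.
-/

section GradedRing

variable {ι R A : Type*}

def Submodule.toIdealOfMulMem [CommSemiring R] [Semiring A] [Algebra R A] (p : Submodule R A)
    (hp : ∀ (a : A) {b : A}, b ∈ p → a * b ∈ p) : Ideal A where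
  carrier := p
  add_mem' := p.add_mem
  zero_mem' := p.zero_mem
  smul_mem' := hp

theorem Submodule.restrictScalars_toIdealOfMulMem [CommSemiring R] [Semiring A] [Algebra R A]
    (p : Submodule R A) (hp : ∀ (a : A) {b : A}, b ∈ p → a * b ∈ p) :
    (p.toIdealOfMulMem hp).restrictScalars R = p :=
  rfl

theorem DirectSum.iSup_inf_eq_of_le_grade [DecidableEq ι] [Semiring R] [AddCommMonoid A]
    [Module R A] (𝒜 : ι → Submodule R A) [DirectSum.Decomposition 𝒜]
    {P : ι → Submodule R A} (hP : ∀ i, P i ≤ 𝒜 i) (i : ι) :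
    (⨆ j, P j) ⊓ 𝒜 i = P i := by
  refine le_antisymm ?_ (le_inf (le_iSup P i) (hP i))
  rintro x ⟨hx, hxi⟩
  rw [← DirectSum.decompose_of_mem_same 𝒜 hxi]
  clear hxi
  induction hx using Submodule.iSup_induction' with
  | mem j y hy =>
    obtain rfl | hji := eq_or_ne j i
    · rwa [DirectSum.decompose_of_mem_same 𝒜 (hP j hy)]
    · rw [DirectSum.decompose_of_mem_ne 𝒜 (hP j hy) hji]
      exact (P i).zero_mem
  | zero => simp
  | add y z _ _ hy hz =>
    rw [DirectSum.decompose_add, DirectSum.add_apply, Submodule.coe_add]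
    exact (P i).add_mem hy hz

theorem DirectSum.mul_mem_iSup_of_grade_mul_le [DecidableEq ι] [AddMonoid ι] [CommSemiring R]
    [Semiring A] [Algebra R A] (𝒜 : ι → Submodule R A) [GradedAlgebra 𝒜]
    {P : ι → Submodule R A} (hP : ∀ i j, ∀ a ∈ 𝒜 i, ∀ b ∈ P j, a * b ∈ P (i + j))
    (a : A) {b : A} (hb : b ∈ ⨆ j, P j) : a * b ∈ ⨆ j, P j := by
  induction hb using Submodule.iSup_induction' with
  | mem j b hb =>
    induction a using DirectSum.Decomposition.inductionOn 𝒜 with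
    | zero => simp
    | homogeneous a => exact Submodule.mem_iSup_of_mem _ (hP _ j a a.2 b hb)
    | add a a' ha ha' => rw [add_mul]; exact add_mem ha ha'
  | zero => simp
  | add b b' _ _ hb hb' => rw [mul_add]; exact add_mem hb hb'

end GradedRing

section Truncation

variable {d : ℕ} {n : Fin d → ℕ} {A B : Set (Fin d → ℕ)}
  {I I' : Ideal (MvPolynomial (PPVars d n) ℂ)} {u v : Fin d → ℕ}

attribute [local instance] MvPolynomial.weightedGradedAlgebra

def truncPiece (d : ℕ) (n : Fin d → ℕ) (A B : Set (Fin d → ℕ))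
    (I : Ideal (MvPolynomial (PPVars d n) ℂ)) (u : Fin d → ℕ) :
    Submodule ℂ (MvPolynomial (PPVars d n) ℂ) :=
  (⨆ _ : u ∈ A, coxPiece d n u) ⊔ (⨆ _ : u ∈ B \ A, idealPiece d n I u)

theorem truncPiece_le_coxPiece (u : Fin d → ℕ) : truncPiece d n A B I u ≤ coxPiece d n u :=
  sup_le (iSup_le fun _ => le_rfl) (iSup_le fun _ => inf_le_right)

theorem truncPiece_of_mem (hA : u ∈ A) :
    truncPiece d n A B I u = coxPiece d n u := by
  rw [truncPiece, iSup_pos hA, iSup_neg fun h : u ∈ B \ A => h.2 hA, sup_bot_eq]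

theorem truncPiece_of_mem_diff (h : u ∈ B \ A) : truncPiece d n A B I u = idealPiece d n I u := by
  rw [truncPiece, iSup_neg h.2, iSup_pos h, bot_sup_eq]

theorem truncPiece_of_notMem (hAB : A ⊆ B) (hB : u ∉ B) : truncPiece d n A B I u = ⊥ := by
  rw [truncPiece, iSup_neg fun h => hB (hAB h), iSup_neg fun h : u ∈ B \ A => hB h.1, sup_bot_eq]

theorem idealPiece_le_truncPiece (hB : u ∈ B) :
    idealPiece d n I u ≤ truncPiece d n A B I u := by
  by_cases hA : u ∈ A
  · rw [truncPiece_of_mem hA]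
    exact inf_le_right
  · rw [truncPiece_of_mem_diff ⟨hB, hA⟩]

theorem mul_mem_truncPiece (hAB : A ⊆ B)
    (hBadd : ∀ u ∈ B, ∀ v : Fin d → ℕ, u + v ∈ B)
    (hAadd : ∀ u ∈ A, ∀ v : Fin d → ℕ, u + v ∈ A)
    {g f : MvPolynomial (PPVars d n) ℂ} (hg : g ∈ coxPiece d n v)
    (hf : f ∈ truncPiece d n A B I u) : g * f ∈ truncPiece d n A B I (v + u) := by
  have hgf : g * f ∈ coxPiece d n (v + u) :=
    IsWeightedHomogeneous.mul hg (truncPiece_le_coxPiece u hf)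
  rw [add_comm v u] at hgf ⊢
  by_cases hA : u ∈ A
  · rwa [truncPiece_of_mem (hAadd u hA v)]
  by_cases hB : u ∈ B
  · rw [truncPiece_of_mem_diff ⟨hB, hA⟩] at hf
    exact idealPiece_le_truncPiece (hBadd u hB v) ⟨I.mul_mem_left g hf.1, hgf⟩
  · rw [truncPiece_of_notMem hAB hB, Submodule.mem_bot] at hf
    simp [hf]

theorem truncGraded_mul_mem (hAB : A ⊆ B)
    (hBadd : ∀ u ∈ B, ∀ v : Fin d → ℕ, u + v ∈ B)
    (hAadd : ∀ u ∈ A, ∀ v : Fin d → ℕ, u + v ∈ A)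
    (g : MvPolynomial (PPVars d n) ℂ) {f : MvPolynomial (PPVars d n) ℂ}
    (hf : f ∈ truncGraded d n A B I) : g * f ∈ truncGraded d n A B I :=
  DirectSum.mul_mem_iSup_of_grade_mul_le (weightedHomogeneousSubmodule ℂ (wPP d n))
    (fun _ _ _ hg _ hf => mul_mem_truncPiece hAB hBadd hAadd hg hf) g hf

theorem truncGraded_inf_coxPiece (u : Fin d → ℕ) :
    truncGraded d n A B I ⊓ coxPiece d n u = truncPiece d n A B I u :=
  DirectSum.iSup_inf_eq_of_le_grade (weightedHomogeneousSubmodule ℂ (wPP d n))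
    truncPiece_le_coxPiece u

theorem idealPiece_eq_of_truncGraded_eq (h : truncGraded d n A B I = truncGraded d n A B I')
    (hu : u ∈ B \ A) : idealPiece d n I u = idealPiece d n I' u := by
  rw [← truncPiece_of_mem_diff (I := I) hu, ← truncGraded_inf_coxPiece, h,
    truncGraded_inf_coxPiece, truncPiece_of_mem_diff hu]

theorem idealFromDegrees_congr {E : Set (Fin d → ℕ)}
    (h : ∀ u ∈ E, idealPiece d n I u = idealPiece d n I' u) :
    idealFromDegrees d n I E = idealFromDegrees d n I' E := by
  unfold idealFromDegrees
  congr 1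
  ext f
  exact exists_congr fun u => and_congr_right fun hu => SetLike.ext_iff.mp (h u hu) f

end Truncation

theorem truncation_is_ideal_and_injective_on_saturated_general (r d : ℕ) (n : Fin d → ℕ)
    (A B : Set (Fin d → ℕ)) (hAB : A ⊆ B)
    (hBadd : ∀ u ∈ B, ∀ v : Fin d → ℕ, u + v ∈ B)
    (hAadd : ∀ u ∈ A, ∀ v : Fin d → ℕ, u + v ∈ A) :
    (∀ I : Ideal (MvPolynomial (PPVars d n) ℂ), IsHomog d n I →
      ∃ JI : Ideal (MvPolynomial (PPVars d n) ℂ),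
        Submodule.restrictScalars ℂ JI = truncGraded d n A B I ∧
        ∀ u : Fin d → ℕ,
          Submodule.restrictScalars ℂ JI ⊓ coxPiece d n u =
            (⨆ _ : u ∈ A, coxPiece d n u) ⊔ (⨆ _ : u ∈ B \ A, idealPiece d n I u)) ∧
    ((∀ I' : Ideal (MvPolynomial (PPVars d n) ℂ), IsHomog d n I' →
        satSet I' (irrel d n) = (I' : Set (MvPolynomial (PPVars d n) ℂ)) →
        (∀ u : Fin d → ℕ, HF d n I' u = min (Module.finrank ℂ ↥(coxPiece d n u)) r) →
        satSet (idealFromDegrees d n I' (B \ A)) (irrel d n) =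
          (I' : Set (MvPolynomial (PPVars d n) ℂ))) →
      ∀ I I' : Ideal (MvPolynomial (PPVars d n) ℂ),
        IsHomog d n I → IsHomog d n I' →
        satSet I (irrel d n) = (I : Set (MvPolynomial (PPVars d n) ℂ)) →
        satSet I' (irrel d n) = (I' : Set (MvPolynomial (PPVars d n) ℂ)) →
        (∀ u : Fin d → ℕ, HF d n I u = min (Module.finrank ℂ ↥(coxPiece d n u)) r) →
        (∀ u : Fin d → ℕ, HF d n I' u = min (Module.finrank ℂ ↥(coxPiece d n u)) r) →
        truncGraded d n A B I = truncGraded d n A B I' → I = I') := by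
  refine ⟨fun I _ => ?_, ?_⟩
  · have hmul := truncGraded_mul_mem (I := I) hAB hBadd hAadd
    exact ⟨_, Submodule.restrictScalars_toIdealOfMulMem _ hmul, truncGraded_inf_coxPiece⟩
  · intro hsuff I I' hI hI' hsatI hsatI' hHFI hHFI' htr
    have hgen : idealFromDegrees d n I (B \ A) = idealFromDegrees d n I' (B \ A) :=
      idealFromDegrees_congr fun u hu => idealPiece_eq_of_truncGraded_eq htr hu
    apply SetLike.coe_injective
    rw [← hsuff I hI hsatI hHFI, ← hsuff I' hI' hsatI' hHFI', hgen]

/-- Proposition 5.2(a),(c) for products of projective spaces: for subsets `𝒜 ⊆ ℬ ⊆ ℕ^d` closed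
under translation, (a) the graded subspace `J` associated to a homogeneous ideal `I` is a
homogeneous ideal, and (b) if `ℬ∖𝒜` is `(r,X)`-sufficient then saturated ideals with Hilbert
function `h_{r,X}` are distinguished by their associated ideals `J`. -/
theorem truncation_is_ideal_and_injective_on_saturated (r d : ℕ) (hr : 1 ≤ r) (hd : 1 ≤ d)
    (n : Fin d → ℕ) (hn : ∀ i, 1 ≤ n i)
    (A B : Set (Fin d → ℕ)) (hAB : A ⊆ B)
    (hBadd : ∀ u ∈ B, ∀ v : Fin d → ℕ, u + v ∈ B)
    (hAadd : ∀ u ∈ A, ∀ v : Fin d → ℕ, u + v ∈ A) :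
    (∀ I : Ideal (MvPolynomial (PPVars d n) ℂ), IsHomog d n I →
      ∃ JI : Ideal (MvPolynomial (PPVars d n) ℂ),
        Submodule.restrictScalars ℂ JI = truncGraded d n A B I ∧
        ∀ u : Fin d → ℕ,
          Submodule.restrictScalars ℂ JI ⊓ coxPiece d n u =
            (⨆ _ : u ∈ A, coxPiece d n u) ⊔ (⨆ _ : u ∈ B \ A, idealPiece d n I u)) ∧
    ((∀ I' : Ideal (MvPolynomial (PPVars d n) ℂ), IsHomog d n I' →
        satSet I' (irrel d n) = (I' : Set (MvPolynomial (PPVars d n) ℂ)) →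
        (∀ u : Fin d → ℕ, HF d n I' u = min (Module.finrank ℂ ↥(coxPiece d n u)) r) →
        satSet (idealFromDegrees d n I' (B \ A)) (irrel d n) =
          (I' : Set (MvPolynomial (PPVars d n) ℂ))) →
      ∀ I I' : Ideal (MvPolynomial (PPVars d n) ℂ),
        IsHomog d n I → IsHomog d n I' →
        satSet I (irrel d n) = (I : Set (MvPolynomial (PPVars d n) ℂ)) →
        satSet I' (irrel d n) = (I' : Set (MvPolynomial (PPVars d n) ℂ)) →
        (∀ u : Fin d → ℕ, HF d n I u = min (Module.finrank ℂ ↥(coxPiece d n u)) r) →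
        (∀ u : Fin d → ℕ, HF d n I' u = min (Module.finrank ℂ ↥(coxPiece d n u)) r) →
        truncGraded d n A B I = truncGraded d n A B I' → I = I') :=
  truncation_is_ideal_and_injective_on_saturated_general r d n A B hAB hBadd hAadd
end
end
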